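/- The fifth-order real amplitude system with right-hand side f1 = c1*A1 + 2*c2*A2*A3 + 3*c3*A1^3 + 6*c3*A1*(A2^2+A3^2) + 12*c4*(A1^2*A2*A3 + (2*A1^2+A2^2+A3^2)*A2*A3) + c5*(30*A1*A2^2*A3^2 + 10*A1*(A1^4+3*A2^4+3*A3^4+6*A1^2*A2^2+6*A1^2*A3^2+12*A2^2*A3^2)) (and cyclic analogues for f2, f3) is the negative Euclidean gradient of E_p(A1,A2,A3) = -[ (1/2)*c1*(A1^2+A2^2+A3^2) + 2*c2*A1*A2*A3 + (3/4)*c3*(A1^4+A2^4+A3^4) + 3*c3*(A1^2*A2^2+A1^2*A3^2+A2^2*A3^2) + 12*c4*(A1^3*A2*A3+A1*A2^3*A3+A1*A2*A3^3) + c5*(75*A1^2*A2^2*A3^2 + (5/3)*(A1^6+A2^6+A3^6) + 15*(A1^2*A2^4+A1^4*A2^2+A1^2*A3^4+A1^4*A3^2+A2^2*A3^4+A2^4*A3^2)) ]. -/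
import Mathlib

/-- First component of the fifth-order real amplitude system; the other components are
obtained by the corresponding cyclic permutation of the arguments. -/
def quintRHS (c1 c2 c3 c4 c5 a1 a2 a3 : ℝ) : ℝ :=
  c1 * a1 + 2 * c2 * a2 * a3 + 3 * c3 * a1 ^ 3 + 6 * c3 * a1 * (a2 ^ 2 + a3 ^ 2)
    + 12 * c4 * (a1 ^ 2 * a2 * a3 + (2 * a1 ^ 2 + a2 ^ 2 + a3 ^ 2) * a2 * a3)
    + c5 * (30 * a1 * a2 ^ 2 * a3 ^ 2
        + 10 * a1 * (a1 ^ 4 + 3 * a2 ^ 4 + 3 * a3 ^ 4 + 6 * a1 ^ 2 * a2 ^ 2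
            + 6 * a1 ^ 2 * a3 ^ 2 + 12 * a2 ^ 2 * a3 ^ 2))

/-- The potential energy `E_p` of the fifth-order real amplitude system. -/
noncomputable def Ep (c1 c2 c3 c4 c5 a1 a2 a3 : ℝ) : ℝ :=
  -((1 / 2) * c1 * (a1 ^ 2 + a2 ^ 2 + a3 ^ 2) + 2 * c2 * a1 * a2 * a3
    + (3 / 4) * c3 * (a1 ^ 4 + a2 ^ 4 + a3 ^ 4)
    + 3 * c3 * (a1 ^ 2 * a2 ^ 2 + a1 ^ 2 * a3 ^ 2 + a2 ^ 2 * a3 ^ 2)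
    + 12 * c4 * (a1 ^ 3 * a2 * a3 + a1 * a2 ^ 3 * a3 + a1 * a2 * a3 ^ 3)
    + c5 * (75 * a1 ^ 2 * a2 ^ 2 * a3 ^ 2 + (5 / 3) * (a1 ^ 6 + a2 ^ 6 + a3 ^ 6)
        + 15 * (a1 ^ 2 * a2 ^ 4 + a1 ^ 4 * a2 ^ 2 + a1 ^ 2 * a3 ^ 4 + a1 ^ 4 * a3 ^ 2
            + a2 ^ 2 * a3 ^ 4 + a2 ^ 4 * a3 ^ 2)))

lemma hasDerivAt_poly6 (b0 b1 b2 b3 b4 b5 b6 x : ℝ) :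
    HasDerivAt (fun t : ℝ => b0 + b1 * t + b2 * t ^ 2 + b3 * t ^ 3 + b4 * t ^ 4
        + b5 * t ^ 5 + b6 * t ^ 6)
      (b1 + 2 * b2 * x + 3 * b3 * x ^ 2 + 4 * b4 * x ^ 3 + 5 * b5 * x ^ 4 + 6 * b6 * x ^ 5)
      x := by
  have h : HasDerivAt (fun t : ℝ => b0 + b1 * t + b2 * t ^ 2 + b3 * t ^ 3 + b4 * t ^ 4
      + b5 * t ^ 5 + b6 * t ^ 6)
      (0 + b1 * 1 + b2 * (2 * x ^ 1) + b3 * (3 * x ^ 2) + b4 * (4 * x ^ 3)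
        + b5 * (5 * x ^ 4) + b6 * (6 * x ^ 5)) x := by
    exact ((((((hasDerivAt_const x b0).add ((hasDerivAt_id x).const_mul b1)).add
      ((hasDerivAt_pow 2 x).const_mul b2)).add ((hasDerivAt_pow 3 x).const_mul b3)).add
      ((hasDerivAt_pow 4 x).const_mul b4)).add ((hasDerivAt_pow 5 x).const_mul b5)).add
      ((hasDerivAt_pow 6 x).const_mul b6)
  convert h using 1
  ring

lemma deriv_poly6 (b0 b1 b2 b3 b4 b5 b6 x : ℝ) :
    deriv (fun t : ℝ => b0 + b1 * t + b2 * t ^ 2 + b3 * t ^ 3 + b4 * t ^ 4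
        + b5 * t ^ 5 + b6 * t ^ 6) x
      = b1 + 2 * b2 * x + 3 * b3 * x ^ 2 + 4 * b4 * x ^ 3 + 5 * b5 * x ^ 4 + 6 * b6 * x ^ 5 :=
  (hasDerivAt_poly6 b0 b1 b2 b3 b4 b5 b6 x).deriv

lemma deriv_Ep (c1 c2 c3 c4 c5 u v x : ℝ) :
    deriv (fun t => Ep c1 c2 c3 c4 c5 t u v) x
      = -(quintRHS c1 c2 c3 c4 c5 x u v) := by
  have hf : (fun t => Ep c1 c2 c3 c4 c5 t u v)
      = fun t : ℝ =>
        ((-1/2) * v^2 * c1 + (-3/4) * v^4 * c3 + (-5/3) * v^6 * c5 + (-1/2) * u^2 * c1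
          + (-3) * u^2 * v^2 * c3 + (-15) * u^2 * v^4 * c5 + (-3/4) * u^4 * c3
          + (-15) * u^4 * v^2 * c5 + (-5/3) * u^6 * c5)
        + ((-2) * u * v * c2 + (-12) * u * v^3 * c4 + (-12) * u^3 * v * c4) * t
        + ((-1/2) * c1 + (-3) * v^2 * c3 + (-15) * v^4 * c5 + (-3) * u^2 * c3
          + (-75) * u^2 * v^2 * c5 + (-15) * u^4 * c5) * t^2
        + ((-12) * u * v * c4) * t^3
        + ((-3/4) * c3 + (-15) * v^2 * c5 + (-15) * u^2 * c5) * t^4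
        + 0 * t^5
        + ((-5/3) * c5) * t^6 := by
    funext t
    simp only [Ep]
    ring
  rw [hf, deriv_poly6, quintRHS]
  ring

/-- The fifth-order real amplitude system is the negative Euclidean gradient of `E_p`. -/
theorem quintic_is_gradient_system (c1 c2 c3 c4 c5 : ℝ) (a1 a2 a3 : ℝ) :
    quintRHS c1 c2 c3 c4 c5 a1 a2 a3
      = -(deriv (fun x => Ep c1 c2 c3 c4 c5 x a2 a3) a1) ∧
    quintRHS c1 c2 c3 c4 c5 a2 a3 a1
      = -(deriv (fun x => Ep c1 c2 c3 c4 c5 a1 x a3) a2) ∧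
    quintRHS c1 c2 c3 c4 c5 a3 a1 a2
      = -(deriv (fun x => Ep c1 c2 c3 c4 c5 a1 a2 x) a3) := by
  have hsym : ∀ x y z : ℝ, Ep c1 c2 c3 c4 c5 x y z = Ep c1 c2 c3 c4 c5 z x y := by
    intro x y z; simp only [Ep]; ring
  have hsymR : ∀ x y z : ℝ, quintRHS c1 c2 c3 c4 c5 x y z = quintRHS c1 c2 c3 c4 c5 x z y := by
    intro x y z; simp only [quintRHS]; ring
  refine ⟨?_, ?_, ?_⟩
  · rw [deriv_Ep]; ring
  · have : (fun x => Ep c1 c2 c3 c4 c5 a1 x a3) = fun x => Ep c1 c2 c3 c4 c5 x a3 a1 := by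
      funext x; rw [hsym, hsym]
    rw [this, deriv_Ep]; ring
  · have : (fun x => Ep c1 c2 c3 c4 c5 a1 a2 x) = fun x => Ep c1 c2 c3 c4 c5 x a1 a2 := by
      funext x; rw [hsym]
    rw [this, deriv_Ep]; ring
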